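/- arXiv:0812.0553 — 4 statements merged into one kernel-verified Lean document; each statement's English description precedes it below -/
import Mathlib

section
/- Let A be an n×n nonnegative integer matrix and A₋ the (n+2)×(n+2) matrix of the E₋ construction (upper-left block A; additional nonzero entries A₋(n,n+1)=A₋(n+1,n)=A₋(n+1,n+1)=A₋(n+1,n+2)=A₋(n+2,n+1)=A₋(n+2,n+2)=1). Then ℤ^{n+2}/(I_{n+2} - A₋ᵀ)ℤ^{n+2} ≅ ℤⁿ/(I_n - Aᵀ)ℤⁿ as abelian groups. -/
open Matrix

/-- The cokernel `ℤᵏ/(M·ℤᵏ)` of a square integer matrix `M`. -/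
abbrev Matrix.intCoker {k : ℕ} (M : Matrix (Fin k) (Fin k) ℤ) :=
  (Fin k → ℤ) ⧸ LinearMap.range M.mulVecLin

/-- The matrix `A₋` of the `E ↦ E₋` construction: the upper-left `n×n` block
is `A`, and the only nonzero new entries (0-indexed, so vertex `v_n`
corresponds to index `n-1`) are
`A₋(n-1,n) = A₋(n,n-1) = A₋(n,n) = A₋(n,n+1) = A₋(n+1,n) = A₋(n+1,n+1) = 1`. -/
def minusExt {n : ℕ} (A : Matrix (Fin n) (Fin n) ℤ) :
    Matrix (Fin (n + 2)) (Fin (n + 2)) ℤ :=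
  fun i j =>
    if hi : (i : ℕ) < n then
      if hj : (j : ℕ) < n then A ⟨i, hi⟩ ⟨j, hj⟩
      else if (i : ℕ) = n - 1 ∧ (j : ℕ) = n then 1 else 0
    else
      if ((i : ℕ) = n ∧ (j : ℕ) = n - 1) ∨ ((i : ℕ) = n ∧ (j : ℕ) = n) ∨
          ((i : ℕ) = n ∧ (j : ℕ) = n + 1) ∨ ((i : ℕ) = n + 1 ∧ (j : ℕ) = n) ∨
          ((i : ℕ) = n + 1 ∧ (j : ℕ) = n + 1) then 1 else 0

namespace MinusExtCoker

variable {n : ℕ}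

set_option linter.unnecessarySeqFocus false

/-- Truncation-with-correction map `ℤ^{n+2} → ℤⁿ`. -/
def phi (n : ℕ) : (Fin (n+2) → ℤ) →ₗ[ℤ] (Fin n → ℤ) where
  toFun x i := x (i.castSucc.castSucc) - (if (i:ℕ) = n - 1 then x (Fin.last (n+1)) else 0)
  map_add' x y := by funext i; by_cases h : (i:ℕ) = n-1 <;> simp [h] <;> ring
  map_smul' c x := by funext i; by_cases h : (i:ℕ) = n-1 <;> simp [h] <;> ring

/-- Extension-by-zero map `ℤⁿ → ℤ^{n+2}`. -/
def iota (n : ℕ) : (Fin n → ℤ) →ₗ[ℤ] (Fin (n+2) → ℤ) where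
  toFun y j := if h : (j:ℕ) < n then y ⟨j, h⟩ else 0
  map_add' y z := by funext j; by_cases h : (j:ℕ) < n <;> simp [h]
  map_smul' c y := by funext j; by_cases h : (j:ℕ) < n <;> simp [h]

lemma sumM (hn : 0 < n) (A : Matrix (Fin n) (Fin n) ℤ) (x : Fin (n+2) → ℤ) (i : Fin (n+2)) :
    ∑ j, minusExt A j i * x j =
      if hi : (i:ℕ) < n then
        (∑ j : Fin n, A j ⟨i, hi⟩ * x (j.castSucc.castSucc))
          + (if (i:ℕ) = n - 1 then x ((Fin.last n).castSucc) else 0)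
      else if (i:ℕ) = n then
        x ((⟨n-1, by omega⟩ : Fin n).castSucc.castSucc) + x ((Fin.last n).castSucc)
          + x (Fin.last (n+1))
      else x ((Fin.last n).castSucc) + x (Fin.last (n+1)) := by
  rw [Fin.sum_univ_castSucc, Fin.sum_univ_castSucc]
  by_cases hi : (i:ℕ) < n
  · rw [dif_pos hi]
    have h1 : ∑ j : Fin n, minusExt A j.castSucc.castSucc i * x j.castSucc.castSucc
        = ∑ j : Fin n, A j ⟨i, hi⟩ * x (j.castSucc.castSucc) := by
      refine Finset.sum_congr rfl fun j _ => ?_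
      have : minusExt A j.castSucc.castSucc i = A j ⟨i, hi⟩ := by
        simp only [minusExt, Fin.coe_castSucc]
        rw [dif_pos j.isLt, dif_pos hi]
      rw [this]
    rw [h1]
    have h2 : minusExt A (Fin.last n).castSucc i = if (i:ℕ) = n - 1 then 1 else 0 := by
      simp only [minusExt, Fin.coe_castSucc, Fin.val_last]
      rw [dif_neg (lt_irrefl n)]
      split_ifs <;> simp only [true_and] at * <;> omega
    have h3 : minusExt A (Fin.last (n+1)) i = 0 := by
      simp only [minusExt, Fin.val_last]
      rw [dif_neg (by omega : ¬ n + 1 < n)]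
      split_ifs <;> simp only [true_and] at * <;> omega
    rw [h2, h3]
    split_ifs <;> ring
  · rw [dif_neg hi]
    have hz : ∑ j : Fin n, minusExt A j.castSucc.castSucc i * x j.castSucc.castSucc =
        if (i:ℕ) = n then x ((⟨n-1, by omega⟩ : Fin n).castSucc.castSucc) else 0 := by
      have hb : ∀ j : Fin n, minusExt A j.castSucc.castSucc i * x j.castSucc.castSucc
          = if j = (⟨n-1, by omega⟩ : Fin n) ∧ (i:ℕ) = n
            then x ((⟨n-1, by omega⟩ : Fin n).castSucc.castSucc) else 0 := by
        intro j
        have : minusExt A j.castSucc.castSucc i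
            = if (j:ℕ) = n - 1 ∧ (i:ℕ) = n then 1 else 0 := by
          simp only [minusExt, Fin.coe_castSucc]
          rw [dif_pos j.isLt, dif_neg hi]
        rw [this]
        by_cases hc : (j:ℕ) = n - 1 ∧ (i:ℕ) = n
        · rw [if_pos hc, if_pos ⟨Fin.ext hc.1, hc.2⟩, one_mul]
          congr 1
          exact Fin.ext hc.1
        · rw [if_neg hc, if_neg (by rw [Fin.ext_iff] at *; simpa using hc), zero_mul]
      rw [Finset.sum_congr rfl fun j _ => hb j]
      by_cases he : (i:ℕ) = n
      · simp only [he, and_true]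
        rw [Finset.sum_ite_eq' Finset.univ]
        simp
      · simp [he]
    rw [hz]
    have h2 : minusExt A (Fin.last n).castSucc i = 1 := by
      simp only [minusExt, Fin.coe_castSucc, Fin.val_last]
      rw [dif_neg (lt_irrefl n)]
      have : (i:ℕ) = n ∨ (i:ℕ) = n + 1 := by omega
      rcases this with h | h
      · exact if_pos (Or.inr (Or.inl ⟨trivial, h⟩))
      · exact if_pos (Or.inr (Or.inr (Or.inl ⟨trivial, h⟩)))
    have h3 : minusExt A (Fin.last (n+1)) i = 1 := by
      simp only [minusExt, Fin.val_last]
      rw [dif_neg (by omega : ¬ n + 1 < n)]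
      have : (i:ℕ) = n ∨ (i:ℕ) = n + 1 := by omega
      rcases this with h | h
      · exact if_pos (Or.inr (Or.inr (Or.inr (Or.inl ⟨trivial, h⟩))))
      · exact if_pos (Or.inr (Or.inr (Or.inr (Or.inr ⟨trivial, h⟩))))
    rw [h2, h3]
    split_ifs <;> ring

lemma Bapp (A : Matrix (Fin n) (Fin n) ℤ) (x : Fin (n+2) → ℤ) (i : Fin (n+2)) :
    ((1 - (minusExt A)ᵀ).mulVecLin x) i = x i - ∑ j, minusExt A j i * x j := by
  rw [Matrix.mulVecLin_apply, Matrix.sub_mulVec, Matrix.one_mulVec, Pi.sub_apply]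
  simp [Matrix.mulVec, dotProduct, Matrix.transpose_apply]

lemma Capp (A : Matrix (Fin n) (Fin n) ℤ) (y : Fin n → ℤ) (i : Fin n) :
    ((1 - Aᵀ).mulVecLin y) i = y i - ∑ j, A j i * y j := by
  rw [Matrix.mulVecLin_apply, Matrix.sub_mulVec, Matrix.one_mulVec, Pi.sub_apply]
  simp [Matrix.mulVec, dotProduct, Matrix.transpose_apply]

lemma BappLt (hn : 0 < n) (A : Matrix (Fin n) (Fin n) ℤ) (x : Fin (n+2) → ℤ) (i : Fin n) :
    ((1 - (minusExt A)ᵀ).mulVecLin x) (i.castSucc.castSucc)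
      = x (i.castSucc.castSucc) - (∑ j : Fin n, A j i * x (j.castSucc.castSucc))
        - (if (i:ℕ) = n - 1 then x ((Fin.last n).castSucc) else 0) := by
  rw [Bapp, sumM hn]
  have hlt : ((i.castSucc.castSucc : Fin (n+2)) : ℕ) < n := i.isLt
  rw [dif_pos hlt]
  have he : (⟨((i.castSucc.castSucc : Fin (n+2)) : ℕ), hlt⟩ : Fin n) = i := Fin.ext rfl
  rw [he]
  simp only [Fin.coe_castSucc]
  split_ifs <;> ring

lemma BappN (hn : 0 < n) (A : Matrix (Fin n) (Fin n) ℤ) (x : Fin (n+2) → ℤ) :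
    ((1 - (minusExt A)ᵀ).mulVecLin x) ((Fin.last n).castSucc)
      = x ((Fin.last n).castSucc) - x ((⟨n-1, by omega⟩ : Fin n).castSucc.castSucc)
        - x ((Fin.last n).castSucc) - x (Fin.last (n+1)) := by
  rw [Bapp, sumM hn]
  rw [dif_neg (by simp : ¬ (((Fin.last n).castSucc : Fin (n+2)) : ℕ) < n),
    if_pos (by simp : (((Fin.last n).castSucc : Fin (n+2)) : ℕ) = n)]
  ring

lemma BappN1 (hn : 0 < n) (A : Matrix (Fin n) (Fin n) ℤ) (x : Fin (n+2) → ℤ) :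
    ((1 - (minusExt A)ᵀ).mulVecLin x) (Fin.last (n+1))
      = x (Fin.last (n+1)) - x ((Fin.last n).castSucc) - x (Fin.last (n+1)) := by
  rw [Bapp, sumM hn]
  rw [dif_neg (by simp : ¬ ((Fin.last (n+1) : Fin (n+2)) : ℕ) < n),
    if_neg (by simp : ¬ ((Fin.last (n+1) : Fin (n+2)) : ℕ) = n)]
  ring

lemma finCases (i : Fin (n+2)) :
    (∃ j : Fin n, i = j.castSucc.castSucc) ∨ i = (Fin.last n).castSucc ∨ i = Fin.last (n+1) := by
  by_cases h : (i:ℕ) < n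
  · exact Or.inl ⟨⟨i, h⟩, Fin.ext rfl⟩
  · have h2 := i.isLt
    by_cases h3 : (i:ℕ) = n
    · exact Or.inr (Or.inl (Fin.ext (by simp only [Fin.coe_castSucc, Fin.val_last]; omega)))
    · exact Or.inr (Or.inr (Fin.ext (by simp only [Fin.val_last]; omega)))

-- values of iota
lemma iota_lt (y : Fin n → ℤ) (j : Fin n) : iota n y (j.castSucc.castSucc) = y j := by
  simp only [iota, LinearMap.coe_mk, AddHom.coe_mk, Fin.coe_castSucc]
  rw [dif_pos j.isLt]

lemma iota_n (y : Fin n → ℤ) : iota n y ((Fin.last n).castSucc) = 0 := by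
  simp only [iota, LinearMap.coe_mk, AddHom.coe_mk]
  rw [dif_neg (by simp)]

lemma iota_n1 (y : Fin n → ℤ) : iota n y (Fin.last (n+1)) = 0 := by
  simp only [iota, LinearMap.coe_mk, AddHom.coe_mk]
  rw [dif_neg (by simp)]

lemma phi_apply (x : Fin (n+2) → ℤ) (i : Fin n) :
    phi n x i = x (i.castSucc.castSucc) - (if (i:ℕ) = n - 1 then x (Fin.last (n+1)) else 0) :=
  rfl

/-- Identity 1: `φ ∘ B = C ∘ π`. -/
lemma key1 (hn : 0 < n) (A : Matrix (Fin n) (Fin n) ℤ) (x : Fin (n+2) → ℤ) :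
    phi n ((1 - (minusExt A)ᵀ).mulVecLin x)
      = (1 - Aᵀ).mulVecLin (fun j => x (j.castSucc.castSucc)) := by
  funext i
  rw [phi_apply, BappLt hn, BappN1 hn, Capp]
  split_ifs <;> ring

/-- Identity 4: `φ ∘ ι = id`. -/
lemma key4 (y : Fin n → ℤ) : phi n (iota n y) = y := by
  funext i
  rw [phi_apply, iota_lt, iota_n1]
  split_ifs <;> ring

end MinusExtCoker

open MinusExtCoker in
/-- For a nonnegative `n×n` integer matrix `A` (with `n ≥ 1`),
`ℤⁿ⁺²/(I - A₋ᵀ)ℤⁿ⁺² ≅ ℤⁿ/(I - Aᵀ)ℤⁿ` as abelian groups. -/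
theorem coker_one_sub_minusExt_transpose {n : ℕ} (hn : 0 < n)
    (A : Matrix (Fin n) (Fin n) ℤ) (hA : ∀ i j, 0 ≤ A i j) :
    Nonempty (Matrix.intCoker (1 - (minusExt A)ᵀ) ≃+ Matrix.intCoker (1 - Aᵀ)) := by
  classical
  set RB := LinearMap.range (1 - (minusExt A)ᵀ).mulVecLin with hRB
  set RC := LinearMap.range (1 - Aᵀ).mulVecLin with hRC
  -- auxiliary vectors
  set zvec : (Fin n → ℤ) → (Fin (n+2) → ℤ) := fun y j =>
    if h : (j:ℕ) < n then y ⟨j, h⟩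
    else if (j:ℕ) = n + 1 then -(y ⟨n-1, by omega⟩) else 0 with hzvec
  set wvec : (Fin (n+2) → ℤ) → (Fin (n+2) → ℤ) := fun x j =>
    if (j:ℕ) = n then -(x (Fin.last (n+1)))
    else if (j:ℕ) = n + 1 then -(x ((Fin.last n).castSucc)) else 0 with hwvec
  have zvec_lt : ∀ y (j : Fin n), zvec y (j.castSucc.castSucc) = y j := by
    intro y j
    rw [hzvec]
    simp only [Fin.coe_castSucc]
    rw [dif_pos j.isLt]
  have zvec_n : ∀ y, zvec y ((Fin.last n).castSucc) = 0 := by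
    intro y
    rw [hzvec]; simp only
    rw [dif_neg (by simp), if_neg (by simp)]
  have zvec_n1 : ∀ y, zvec y (Fin.last (n+1)) = -(y ⟨n-1, by omega⟩) := by
    intro y
    rw [hzvec]; simp only
    rw [dif_neg (by simp), if_pos (by simp)]
  have wvec_lt : ∀ x (j : Fin n), wvec x (j.castSucc.castSucc) = 0 := by
    intro x j
    rw [hwvec]; simp only
    rw [if_neg (by have := j.isLt; simp only [Fin.coe_castSucc]; omega),
      if_neg (by have := j.isLt; simp only [Fin.coe_castSucc]; omega)]
  have wvec_n : ∀ x, wvec x ((Fin.last n).castSucc) = -(x (Fin.last (n+1))) := by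
    intro x
    rw [hwvec]; simp only
    rw [if_pos (by simp)]
  have wvec_n1 : ∀ x, wvec x (Fin.last (n+1)) = -(x ((Fin.last n).castSucc)) := by
    intro x
    rw [hwvec]; simp only
    rw [if_neg (by simp), if_pos (by simp)]
  -- Identity 2 : B (zvec y) = ι (C y)
  have key2 : ∀ y, (1 - (minusExt A)ᵀ).mulVecLin (zvec y)
      = iota n ((1 - Aᵀ).mulVecLin y) := by
    intro y
    funext i
    rcases finCases i with ⟨j, rfl⟩ | rfl | rfl
    · rw [BappLt hn, iota_lt, Capp, zvec_lt]
      have hs : ∑ k : Fin n, A k j * zvec y (k.castSucc.castSucc) = ∑ k, A k j * y k :=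
        Finset.sum_congr rfl fun k _ => by rw [zvec_lt]
      rw [hs, zvec_n]
      split_ifs <;> ring
    · rw [BappN hn, iota_n, zvec_n, zvec_lt, zvec_n1]
      ring
    · rw [BappN1 hn, iota_n1, zvec_n, zvec_n1]
      ring
  -- Identity 3 : x - ι (φ x) = B (wvec x)
  have key3 : ∀ x, x - iota n (phi n x) = (1 - (minusExt A)ᵀ).mulVecLin (wvec x) := by
    intro x
    funext i
    rcases finCases i with ⟨j, rfl⟩ | rfl | rfl
    · rw [Pi.sub_apply, BappLt hn, iota_lt, phi_apply, wvec_lt, wvec_n]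
      have hs : ∑ k : Fin n, A k j * wvec x (k.castSucc.castSucc) = 0 := by
        refine Finset.sum_eq_zero fun k _ => by rw [wvec_lt, mul_zero]
      rw [hs]
      split_ifs <;> ring
    · rw [Pi.sub_apply, BappN hn, iota_n, wvec_n, wvec_lt, wvec_n1]
      ring
    · rw [Pi.sub_apply, BappN1 hn, iota_n1, wvec_n, wvec_n1]
      ring
  -- the two induced maps
  have h1 : RB ≤ LinearMap.ker (RC.mkQ.comp (phi n)) := by
    rintro v ⟨x, rfl⟩
    simp only [LinearMap.mem_ker, LinearMap.comp_apply, Submodule.mkQ_apply]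
    rw [Submodule.Quotient.mk_eq_zero]
    exact ⟨fun j => x (j.castSucc.castSucc), (key1 hn A x).symm⟩
  have h2 : RC ≤ LinearMap.ker (RB.mkQ.comp (iota n)) := by
    rintro v ⟨y, rfl⟩
    simp only [LinearMap.mem_ker, LinearMap.comp_apply, Submodule.mkQ_apply]
    rw [Submodule.Quotient.mk_eq_zero]
    exact ⟨zvec y, key2 y⟩
  let f := Submodule.liftQ RB (RC.mkQ.comp (phi n)) h1
  let g := Submodule.liftQ RC (RB.mkQ.comp (iota n)) h2
  refine ⟨{ toFun := f, invFun := g, left_inv := ?_, right_inv := ?_, map_add' := map_add f }⟩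
  · intro v
    obtain ⟨x, rfl⟩ := Submodule.Quotient.mk_surjective RB v
    show g (f (Submodule.Quotient.mk x)) = Submodule.Quotient.mk x
    have : f (Submodule.Quotient.mk x) = Submodule.Quotient.mk (phi n x) :=
      Submodule.liftQ_apply _ _ _
    rw [this]
    have : g (Submodule.Quotient.mk (phi n x)) = Submodule.Quotient.mk (iota n (phi n x)) :=
      Submodule.liftQ_apply _ _ _
    rw [this, Submodule.Quotient.eq]
    exact ⟨-(wvec x), by rw [map_neg, ← key3 x]; abel⟩
  · intro v
    obtain ⟨y, rfl⟩ := Submodule.Quotient.mk_surjective RC v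
    show f (g (Submodule.Quotient.mk y)) = Submodule.Quotient.mk y
    have hg : g (Submodule.Quotient.mk y) = Submodule.Quotient.mk (iota n y) :=
      Submodule.liftQ_apply _ _ _
    have hf : f (Submodule.Quotient.mk (iota n y)) = Submodule.Quotient.mk (phi n (iota n y)) :=
      Submodule.liftQ_apply _ _ _
    rw [hg, hf, key4]
end

section
/- Let A be an n×n integer matrix whose j-th column is zero, and let A' be obtained from A by deleting the j-th row and column. Then ℤⁿ/(I_n - Aᵀ)ℤⁿ ≅ ℤ^{n-1}/(I_{n-1} - (A')ᵀ)ℤ^{n-1} as abelian groups. -/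
open Matrix

/-- If the `j`-th column of the `(m+1)×(m+1)` integer matrix `A` is zero
(vertex `v_j` is a source), and `A'` is obtained from `A` by deleting the
`j`-th row and `j`-th column, then
`ℤ^{m+1}/(I - Aᵀ)ℤ^{m+1} ≅ ℤᵐ/(I - A'ᵀ)ℤᵐ` as abelian groups. -/
theorem coker_one_sub_transpose_source_elim {m : ℕ}
    (A : Matrix (Fin (m + 1)) (Fin (m + 1)) ℤ) (j : Fin (m + 1))
    (hcol : ∀ i, A i j = 0) :
    Nonempty (Matrix.intCoker (1 - Aᵀ) ≃+
      Matrix.intCoker (1 - (A.submatrix j.succAbove j.succAbove)ᵀ)) := by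
  classical
  set M : Matrix (Fin (m + 1)) (Fin (m + 1)) ℤ := 1 - Aᵀ with hM
  set C : Matrix (Fin m) (Fin m) ℤ := 1 - (A.submatrix j.succAbove j.succAbove)ᵀ with hC
  -- the correction vector `c` (column `j` of `M` minus `e_j`)
  set c : Fin (m + 1) → ℤ := fun i => M i j - if i = j then 1 else 0 with hc
  have hcj : c j = 0 := by
    simp [hc, hM, Matrix.sub_apply, Matrix.one_apply, Matrix.transpose_apply, hcol]
  -- row `j` of `M` is `e_j`
  have hMrow : ∀ k, M j k = if j = k then 1 else 0 := by
    intro k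
    simp [hM, Matrix.sub_apply, Matrix.one_apply, Matrix.transpose_apply, hcol k]
  have hmvj : ∀ u : Fin (m + 1) → ℤ, M.mulVec u j = u j := by
    intro u
    simp only [Matrix.mulVec, dotProduct]
    rw [Finset.sum_congr rfl (fun k _ => by rw [hMrow k])]
    simp
  -- the row-operation automorphism `e`
  set f : (Fin (m + 1) → ℤ) →ₗ[ℤ] (Fin (m + 1) → ℤ) :=
    LinearMap.id - (LinearMap.proj j).smulRight c with hf
  set g : (Fin (m + 1) → ℤ) →ₗ[ℤ] (Fin (m + 1) → ℤ) :=
    LinearMap.id + (LinearMap.proj j).smulRight c with hg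
  have hfv : ∀ (v : Fin (m + 1) → ℤ) i, f v i = v i - v j * c i := by
    intro v i; simp [hf, smul_eq_mul]
  have hgv : ∀ (v : Fin (m + 1) → ℤ) i, g v i = v i + v j * c i := by
    intro v i; simp [hg, smul_eq_mul]
  have hfg : f ∘ₗ g = LinearMap.id := by
    ext v i
    simp only [LinearMap.comp_apply, LinearMap.id_apply]
    rw [hfv, hgv, hgv, hcj]
    ring
  have hgf : g ∘ₗ f = LinearMap.id := by
    ext v i
    simp only [LinearMap.comp_apply, LinearMap.id_apply]
    rw [hgv, hfv, hfv, hcj]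
    ring
  set e : (Fin (m + 1) → ℤ) ≃ₗ[ℤ] (Fin (m + 1) → ℤ) := LinearEquiv.ofLinear f g hfg hgf with he
  -- the key computation
  have hMC : ∀ (i k : Fin m), M (j.succAbove i) (j.succAbove k) = C i k := by
    intro i k
    simp [hM, hC, Matrix.sub_apply, Matrix.one_apply, Matrix.transpose_apply,
      Matrix.submatrix_apply, Fin.succAbove_right_inj]
  have hkey : ∀ (u : Fin (m + 1) → ℤ) (i : Fin m),
      f (M.mulVec u) (j.succAbove i) = C.mulVec (fun k => u (j.succAbove k)) i := by
    intro u i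
    rw [hfv, hmvj]
    have h1 : M.mulVec u (j.succAbove i)
        = M (j.succAbove i) j * u j
          + ∑ k : Fin m, M (j.succAbove i) (j.succAbove k) * u (j.succAbove k) := by
      simp only [Matrix.mulVec, dotProduct]
      rw [Fin.sum_univ_succAbove (fun k => M (j.succAbove i) k * u k) j]
    have h2 : c (j.succAbove i) = M (j.succAbove i) j := by
      simp [hc, Fin.succAbove_ne j i]
    rw [h1, h2]
    have h3 : C.mulVec (fun k => u (j.succAbove k)) i
        = ∑ k : Fin m, M (j.succAbove i) (j.succAbove k) * u (j.succAbove k) := by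
      simp only [Matrix.mulVec, dotProduct]
      exact Finset.sum_congr rfl fun k _ => by rw [hMC]
    rw [h3]; ring
  -- the projection onto the smaller cokernel
  set ψ : (Fin (m + 1) → ℤ) →ₗ[ℤ] Matrix.intCoker C :=
    (LinearMap.range C.mulVecLin).mkQ ∘ₗ LinearMap.funLeft ℤ ℤ j.succAbove with hψ
  have hψsurj : Function.Surjective ψ := by
    refine (Submodule.mkQ_surjective _).comp ?_
    exact LinearMap.funLeft_surjective_of_injective ℤ ℤ _ (Fin.succAbove_right_injective)
  have hker : LinearMap.ker ψ
      = Submodule.map (e : (Fin (m + 1) → ℤ) →ₗ[ℤ] (Fin (m + 1) → ℤ))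
          (LinearMap.range M.mulVecLin) := by
    ext v
    constructor
    · intro hv
      have hv' : LinearMap.funLeft ℤ ℤ j.succAbove v ∈ LinearMap.range C.mulVecLin := by
        rw [← Submodule.Quotient.mk_eq_zero (LinearMap.range C.mulVecLin)]
        exact hv
      obtain ⟨w, hw⟩ := hv'
      have u0 : Fin (m + 1) → ℤ := j.insertNth (v j) w
      refine ⟨M.mulVec ((j.insertNth (v j) w : Fin (m + 1) → ℤ)),
        ⟨(j.insertNth (v j) w : Fin (m + 1) → ℤ), rfl⟩, ?_⟩
      show f (M.mulVec ((j.insertNth (v j) w : Fin (m + 1) → ℤ))) = v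
      funext i
      rcases eq_or_ne i j with rfl | hij
      · rw [hfv, hmvj, hcj]
        simp [Fin.insertNth_apply_same]
      · obtain ⟨k, rfl⟩ := Fin.exists_succAbove_eq hij
        rw [hkey]
        have : (fun k => ((j.insertNth (v j) w : Fin (m + 1) → ℤ)) (j.succAbove k)) = w := by
          funext k; simp [Fin.insertNth_apply_succAbove]
        rw [this]
        exact congrFun hw k
    · rintro ⟨x, ⟨u, rfl⟩, rfl⟩
      show ψ (e (M.mulVecLin u)) = 0
      have : ψ (e (M.mulVecLin u)) = (LinearMap.range C.mulVecLin).mkQ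
          (LinearMap.funLeft ℤ ℤ j.succAbove (f (M.mulVec u))) := rfl
      rw [this, Submodule.mkQ_apply, Submodule.Quotient.mk_eq_zero]
      refine ⟨fun k => u (j.succAbove k), ?_⟩
      funext i
      exact (hkey u i).symm
  -- assemble
  have E : Matrix.intCoker M ≃ₗ[ℤ] Matrix.intCoker C :=
    (Submodule.Quotient.equiv _ _ e rfl).trans
      ((Submodule.quotEquivOfEq _ _ hker.symm).trans
        (ψ.quotKerEquivOfSurjective hψsurj))
  exact ⟨E.toAddEquiv⟩
end

section
/- Let E be a finite directed graph with no sources and no sinks in which there is a path between any two vertices (E is irreducible and essential), and suppose E is not a single cycle. Then E contains a cycle, and some cycle of E has an exit. -/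
/-- `l` is a (nonempty) directed path in the graph with source map `s` and
range map `r`: the range of each edge is the source of the next. -/
def IsPath {V E : Type} (s r : E → V) (l : List E) : Prop :=
  l ≠ [] ∧ l.Chain' (fun e f => r e = s f)

/-- `l` is a path from vertex `v` to vertex `w`. -/
def IsPathFromTo {V E : Type} (s r : E → V) (v w : V) (l : List E) : Prop :=
  IsPath s r l ∧ (∃ e, l.head? = some e ∧ s e = v) ∧
    (∃ e, l.getLast? = some e ∧ r e = w)

/-- `l` is a closed path: a path whose last edge ends where its first begins. -/
def IsClosedPath {V E : Type} (s r : E → V) (l : List E) : Prop :=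
  IsPath s r l ∧ ∃ e f, l.head? = some e ∧ l.getLast? = some f ∧ r f = s e

/-- `l` is a cycle: a closed path whose edges have pairwise distinct sources. -/
def IsCycle {V E : Type} (s r : E → V) (l : List E) : Prop :=
  IsClosedPath s r l ∧ (l.map s).Nodup

/-- The path `l` has an exit: an edge `f ≠ e` emitted by the source of some
edge `e` of `l`. -/
def HasExit {V E : Type} (s r : E → V) (l : List E) : Prop :=
  ∃ f e, e ∈ l ∧ s f = s e ∧ f ≠ e

/-!
A closed path through any vertex exists by irreducibility, and cutting it at a repeated source
leaves a shorter closed path, so eventually a cycle. If no cycle had an exit, then for a cycle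
`q` the only edge emitted by a vertex of `q` would be the edge of `q` itself, so the vertices
of `q` would form a set closed under following edges. By irreducibility that set contains every
vertex, and then every edge lies on `q`: the graph would be the single cycle `q`.
-/

variable {V E : Type} {s r : E → V} {l : List E}

lemma IsPath.range_eq_source_succ (hl : IsPath s r l) (i : ℕ) (hi : i + 1 < l.length) :
    r l[i] = s l[i + 1] :=
  hl.2.getElem i hi

lemma IsPathFromTo.isClosedPath {v : V} (hl : IsPathFromTo s r v v l) : IsClosedPath s r l := by
  obtain ⟨hpath, ⟨e, he, hse⟩, ⟨f, hf, hrf⟩⟩ := hl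
  exact ⟨hpath, e, f, he, hf, hrf.trans hse.symm⟩

lemma IsPath.isClosedPath_of_source_eq (hl : IsPath s r l) {i j : ℕ} (hij : i < j)
    (hj : j < l.length) (hs : s l[i] = s l[j]) :
    IsClosedPath s r ((l.drop i).take (j - i)) := by
  have hlen : ((l.drop i).take (j - i)).length = j - i := by
    rw [List.length_take, List.length_drop]; omega
  refine ⟨⟨?_, hl.2.infix ?_⟩, l[i], l[j - 1], ?_, ?_, ?_⟩
  · rw [← List.length_pos_iff, hlen]; omega
  · exact ((l.drop i).take_prefix _).isInfix.trans (l.drop_suffix i).isInfix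
  · rw [List.head?_eq_getElem?, List.getElem?_take_of_lt (by omega), List.getElem?_drop,
      Nat.add_zero, List.getElem?_eq_getElem]
  · rw [List.getLast?_eq_getElem?, hlen, List.getElem?_take_of_lt (by omega),
      List.getElem?_drop, show i + (j - i - 1) = j - 1 by omega, List.getElem?_eq_getElem]
  · rw [hl.range_eq_source_succ (j - 1) (by omega), hs]
    congr 2
    omega

lemma IsClosedPath.exists_isCycle (hl : IsClosedPath s r l) : ∃ c, IsCycle s r c := by
  induction h : l.length using Nat.strong_induction_on generalizing l with
  | _ n ih =>
    by_cases hnodup : (l.map s).Nodup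
    · exact ⟨l, hl, hnodup⟩
    obtain ⟨i, j, hi, hj, hij, hs⟩ : ∃ i j, ∃ (hi : i < l.length) (hj : j < l.length),
        i < j ∧ s l[i] = s l[j] := by
      simpa [List.Nodup, List.pairwise_iff_getElem] using hnodup
    exact ih _ (by rw [List.length_take, ← h]; omega) (hl.1.isClosedPath_of_source_eq hij hj hs) rfl

lemma IsClosedPath.exists_mem_source_eq_range (hl : IsClosedPath s r l) {e : E} (he : e ∈ l) :
    ∃ f ∈ l, s f = r e := by
  obtain ⟨hpath, e₀, f₀, he₀, hf₀, hrf₀⟩ := hl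
  obtain ⟨i, hi, rfl⟩ := List.mem_iff_getElem.mp he
  by_cases hlast : i + 1 < l.length
  · exact ⟨_, List.getElem_mem _, (hpath.range_eq_source_succ i hlast).symm⟩
  · have : l[i] = f₀ := by
      rw [List.getLast?_eq_getElem?, List.getElem?_eq_some_iff] at hf₀
      obtain ⟨_, rfl⟩ := hf₀
      congr 1
      omega
    exact ⟨e₀, List.mem_of_mem_head? he₀, this ▸ hrf₀.symm⟩

lemma mem_of_not_hasExit (h : ¬HasExit s r l) {e : E} (he : s e ∈ l.map s) : e ∈ l := by
  obtain ⟨f, hf, hfe⟩ := List.mem_map.mp he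
  by_contra hne
  exact h ⟨e, f, hf, hfe.symm, fun h => hne (h ▸ hf)⟩

lemma IsPathFromTo.mem_of_forall_range_mem {S : Set V} (hS : ∀ e, s e ∈ S → r e ∈ S)
    {v w : V} (hl : IsPathFromTo s r v w l) (hv : v ∈ S) : w ∈ S := by
  obtain ⟨⟨-, hchain⟩, ⟨e, he, rfl⟩, ⟨f, hf, rfl⟩⟩ := hl
  have hsources : ∀ g ∈ l, s g ∈ S := hchain.induction (fun g => s g ∈ S) l
    (fun _ _ hrs hs => hrs ▸ hS _ hs) fun hne => by
      rw [List.head?_eq_some_head hne, Option.some_inj] at he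
      rwa [he]
  exact hS f (hsources f (List.mem_of_getLast? hf))

theorem exists_cycle_with_exit_of_irreducible_essential_nontrivial_general
    {V E : Type} [Nonempty V] (s r : E → V)
    (hirr : ∀ v w : V, ∃ l : List E, IsPathFromTo s r v w l)
    (hnontrivial : ¬ ∃ l : List E, IsCycle s r l ∧ (∀ e : E, e ∈ l) ∧
      (∀ v : V, v ∈ l.map s)) :
    (∃ l : List E, IsCycle s r l) ∧
      ∃ l : List E, IsCycle s r l ∧ HasExit s r l := by
  obtain ⟨v⟩ := ‹Nonempty V›
  obtain ⟨l₀, hl₀⟩ := hirr v v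
  obtain ⟨q, hq⟩ := hl₀.isClosedPath.exists_isCycle
  refine ⟨⟨q, hq⟩, ?_⟩
  by_contra! hnoexit
  have hclosed : ∀ e, s e ∈ q.map s → r e ∈ q.map s := fun e he => by
    obtain ⟨f, hf, hsf⟩ := hq.1.exists_mem_source_eq_range (mem_of_not_hasExit (hnoexit q hq) he)
    exact hsf ▸ List.mem_map_of_mem hf
  obtain ⟨e, he⟩ := List.exists_mem_of_ne_nil q hq.1.1.1
  have hvertices : ∀ w, w ∈ q.map s := fun w => by
    obtain ⟨l, hl⟩ := hirr (s e) w
    exact hl.mem_of_forall_range_mem (S := {u | u ∈ q.map s}) hclosed (List.mem_map_of_mem he)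
  exact hnontrivial ⟨q, hq, fun e => mem_of_not_hasExit (hnoexit q hq) (hvertices (s e)),
    hvertices⟩

/-- A finite irreducible essential nontrivial graph (no sources, no sinks,
paths between any two vertices, not a single cycle) contains a cycle, and
some cycle has an exit. -/
theorem exists_cycle_with_exit_of_irreducible_essential_nontrivial
    {V E : Type} [Fintype V] [Fintype E] [Nonempty V] (s r : E → V)
    (hnosource : ∀ v : V, ∃ e : E, r e = v)
    (hnosink : ∀ v : V, ∃ e : E, s e = v)
    (hirr : ∀ v w : V, ∃ l : List E, IsPathFromTo s r v w l)
    (hnontrivial : ¬ ∃ l : List E, IsCycle s r l ∧ (∀ e : E, e ∈ l) ∧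
      (∀ v : V, v ∈ l.map s)) :
    (∃ l : List E, IsCycle s r l) ∧
      ∃ l : List E, IsCycle s r l ∧ HasExit s r l :=
  exists_cycle_with_exit_of_irreducible_essential_nontrivial_general s r hirr hnontrivial
end

section
/- Let E be the graph with incidence matrix A_E = [[1,1,1],[0,0,1],[1,0,0]]. Then coker(I₃ - A_Eᵀ) ≅ ℤ/2ℤ, and under this isomorphism the class of (1,1,1) (the sum of the standard basis vectors) is the nonzero element, while coker(I₃ - A_E) ≅ ℤ/2ℤ with the class of (1,1,1) equal to zero. -/
open Matrix

lemma buildIso {k : ℕ} (M : Matrix (Fin k) (Fin k) ℤ)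
    (f : (Fin k → ℤ) →ₗ[ℤ] ZMod 2) (hsurj : Function.Surjective f)
    (hker : LinearMap.ker f = LinearMap.range M.mulVecLin) :
    ∃ φ : M.intCoker ≃+ ZMod 2, ∀ v, φ (Submodule.Quotient.mk v) = f v := by
  let e : M.intCoker ≃ₗ[ℤ] ZMod 2 :=
    (Submodule.quotEquivOfEq _ _ hker.symm).trans (f.quotKerEquivOfSurjective hsurj)
  refine ⟨e.toAddEquiv, fun v => ?_⟩
  rfl

def f1 : (Fin 3 → ℤ) →ₗ[ℤ] ZMod 2 where
  toFun v := ((v 0 + v 1 + v 2 : ℤ) : ZMod 2)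
  map_add' v w := by simp only [Pi.add_apply]; push_cast; ring
  map_smul' c v := by simp only [Pi.smul_apply, smul_eq_mul, zsmul_eq_mul, RingHom.id_apply]; push_cast; ring

def f2 : (Fin 3 → ℤ) →ₗ[ℤ] ZMod 2 where
  toFun v := ((v 0 + v 1 : ℤ) : ZMod 2)
  map_add' v w := by simp only [Pi.add_apply]; push_cast; ring
  map_smul' c v := by simp only [Pi.smul_apply, smul_eq_mul, zsmul_eq_mul, RingHom.id_apply]; push_cast; ring

lemma hM1 : (1 - (!![1,1,1;0,0,1;1,0,0] : Matrix (Fin 3) (Fin 3) ℤ)ᵀ) = !![0,0,-1;-1,1,0;-1,-1,1] := by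
  decide

lemma hM2 : (1 - (!![1,1,1;0,0,1;1,0,0] : Matrix (Fin 3) (Fin 3) ℤ)) = !![0,-1,-1;0,1,-1;-1,0,1] := by
  decide

/-- For the graph with incidence matrix `A = [[1,1,1],[0,0,1],[1,0,0]]`:
`coker(I₃ - Aᵀ) ≅ ℤ/2ℤ` with the class of `(1,1,1)` being the nonzero
element, while `coker(I₃ - A) ≅ ℤ/2ℤ` with the class of `(1,1,1)` being
zero. -/
theorem coker_example_transpose_vs_untransposed :
    (∃ φ : Matrix.intCoker (1 - (!![1,1,1;0,0,1;1,0,0] : Matrix (Fin 3) (Fin 3) ℤ)ᵀ) ≃+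
        ZMod 2, φ (Submodule.Quotient.mk ![1,1,1]) = 1) ∧
    (∃ ψ : Matrix.intCoker (1 - (!![1,1,1;0,0,1;1,0,0] : Matrix (Fin 3) (Fin 3) ℤ)) ≃+
        ZMod 2, ψ (Submodule.Quotient.mk ![1,1,1]) = 0) := by
  constructor
  · have hsurj : Function.Surjective f1 := by
      intro y
      have hy : y = 0 ∨ y = 1 := by revert y; decide
      rcases hy with rfl | rfl
      · exact ⟨0, by simp [f1]⟩
      · exact ⟨![1,0,0], by simp [f1]⟩
    have hker : LinearMap.ker f1 =
        LinearMap.range (1 - (!![1,1,1;0,0,1;1,0,0] : Matrix (Fin 3) (Fin 3) ℤ)ᵀ).mulVecLin := by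
      ext v
      constructor
      · intro hv
        simp only [LinearMap.mem_ker, f1, LinearMap.coe_mk, AddHom.coe_mk] at hv
        have h2 : (2 : ℤ) ∣ (v 0 + v 1 + v 2) :=
          (ZMod.intCast_zmod_eq_zero_iff_dvd _ 2).mp hv
        obtain ⟨t, ht⟩ := h2
        rw [hM1]
        refine ⟨![-t, v 1 - t, -(v 0)], ?_⟩
        funext i
        fin_cases i <;>
          simp [Matrix.mulVecLin, Matrix.mulVec, dotProduct, Fin.sum_univ_three] <;>
          linarith
      · rw [hM1]
        rintro ⟨x, rfl⟩
        simp [f1, Matrix.mulVecLin, Matrix.mulVec, dotProduct, Fin.sum_univ_three]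
        have h2 : (2 : ZMod 2) = 0 := rfl
        ring_nf
        simp [h2]
    obtain ⟨φ, hφ⟩ := buildIso _ f1 hsurj hker
    exact ⟨φ, by rw [hφ]; decide⟩
  · have hsurj : Function.Surjective f2 := by
      intro y
      have hy : y = 0 ∨ y = 1 := by revert y; decide
      rcases hy with rfl | rfl
      · exact ⟨0, by simp [f2]⟩
      · exact ⟨![1,0,0], by simp [f2]⟩
    have hker : LinearMap.ker f2 =
        LinearMap.range (1 - (!![1,1,1;0,0,1;1,0,0] : Matrix (Fin 3) (Fin 3) ℤ)).mulVecLin := by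
      ext v
      constructor
      · intro hv
        simp only [LinearMap.mem_ker, f2, LinearMap.coe_mk, AddHom.coe_mk] at hv
        have h2 : (2 : ℤ) ∣ (v 0 + v 1) :=
          (ZMod.intCast_zmod_eq_zero_iff_dvd _ 2).mp hv
        obtain ⟨t, ht⟩ := h2
        rw [hM2]
        refine ⟨![-t - v 2, v 1 - t, -t], ?_⟩
        funext i
        fin_cases i <;>
          simp [Matrix.mulVecLin, Matrix.mulVec, dotProduct, Fin.sum_univ_three] <;>
          linarith
      · rw [hM2]
        rintro ⟨x, rfl⟩
        simp [f2, Matrix.mulVecLin, Matrix.mulVec, dotProduct, Fin.sum_univ_three]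
        have h2 : (2 : ZMod 2) = 0 := rfl
        ring_nf
        simp [h2]
    obtain ⟨ψ, hψ⟩ := buildIso _ f2 hsurj hker
    exact ⟨ψ, by rw [hψ]; decide⟩
end
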